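/- arXiv:1804.09338 — 3 statements merged into one kernel-verified Lean document; each statement's English description precedes it below -/
import Mathlib

section
/- Let T = (T₁, r₁) ∘ (T₂, r₂) with root r = r₁. If f is an IR2DF on T with f(r) = 1, then f|_{T₁} is an IR2DF on T₁ with value 1 at r₁, f(r₂) = 0, and either f|_{T₂} is an IR2DF of T₂, or f|_{T₂} is not an IR2DF of T₂ but f(N_{T₂}[r₂]) = 1 and f restricted to T₂ − r₂ is an IR2DF of T₂ − r₂. -/
open scoped Classical

open Finset

noncomputable def nbrSum {V : Type*} [Fintype V] (G : SimpleGraph V) (f : V → ℕ) (v : V) : ℕ :=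
  ∑ u ∈ Finset.univ.filter (fun u => G.Adj v u), f u

/-- `f(N[v])`: sum of `f` over the closed neighborhood of `v`. -/
noncomputable def closedNbrSum {V : Type*} [Fintype V] (G : SimpleGraph V) (f : V → ℕ) (v : V) : ℕ :=
  f v + nbrSum G f v

def IsR2DF {V : Type*} [Fintype V] (G : SimpleGraph V) (f : V → ℕ) : Prop :=
  (∀ v, f v ≤ 2) ∧ ∀ v, f v = 0 → 2 ≤ nbrSum G f v

/-- `f` is an independent Roman {2}-dominating function on `G`. -/
def IsIR2DF {V : Type*} [Fintype V] (G : SimpleGraph V) (f : V → ℕ) : Prop :=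
  IsR2DF G f ∧ ∀ ⦃u v : V⦄, G.Adj u v → f u = 0 ∨ f v = 0

/-- One-directional relation generating the composition `(T₁,r₁) ∘ (T₂,r₂)`. -/
def treeCompRel {V₁ V₂ : Type*} (T₁ : SimpleGraph V₁) (T₂ : SimpleGraph V₂) (r₁ : V₁) (r₂ : V₂) :
    (V₁ ⊕ V₂) → (V₁ ⊕ V₂) → Prop
  | .inl a, .inl b => T₁.Adj a b
  | .inr a, .inr b => T₂.Adj a b
  | .inl a, .inr b => a = r₁ ∧ b = r₂
  | .inr _, .inl _ => False

/-- The composition `(T₁,r₁) ∘ (T₂,r₂)`: disjoint union plus the edge `r₁r₂`. -/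
def compGraph {V₁ V₂ : Type*} (T₁ : SimpleGraph V₁) (T₂ : SimpleGraph V₂) (r₁ : V₁) (r₂ : V₂) :
    SimpleGraph (V₁ ⊕ V₂) :=
  SimpleGraph.fromRel (treeCompRel T₁ T₂ r₁ r₂)

/-- The graph `G - r` obtained by deleting the vertex `r`. -/
def delVert {V : Type*} (G : SimpleGraph V) (r : V) : SimpleGraph {v : V // v ≠ r} :=
  SimpleGraph.induce {v : V | v ≠ r} G


/-!
Independence across the edge `r₁r₂` forces `f(r₂) = 0`. Away from `r₁` and `r₂` the composition
does not change neighbourhood sums, so restricting to `T₁` keeps an IR2DF, and on `T₂` only the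
domination of `r₂` can fail. Since `r₁` contributes just `1` to it, the `T₂`-neighbours of `r₂`
carry weight at least `1`; when it is exactly `1`, deleting `r₂` (of weight `0`) leaves every
other neighbourhood sum intact.
-/

theorem IsIR2DF.comp_hom {V W : Type*} [Fintype V] [Fintype W] {G : SimpleGraph V}
    {H : SimpleGraph W} {f : V → ℕ} (hf : IsIR2DF G f) (φ : H →g G)
    (hdom : ∀ w, f (φ w) = 0 → 2 ≤ nbrSum H (f ∘ φ) w) : IsIR2DF H (f ∘ φ) :=
  ⟨⟨fun w => hf.1.1 (φ w), hdom⟩, fun _ _ h => hf.2 (φ.map_adj h)⟩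

theorem nbrSum_delVert {V : Type*} [Fintype V] [DecidableEq V] (G : SimpleGraph V) {r : V}
    {g : V → ℕ} (hg : g r = 0) (v : {x : V // x ≠ r}) :
    nbrSum (delVert G r) (g ∘ Subtype.val) v = nbrSum G g v := by
  simp only [nbrSum, Finset.sum_filter]
  rw [← Finset.sum_erase (a := r) _ (by simp [hg]),
    Finset.sum_subtype (Finset.univ.erase r) (p := (· ≠ r)) (fun x => by simp)]
  rfl

section Composition

variable {V₁ V₂ : Type*} {T₁ : SimpleGraph V₁} {T₂ : SimpleGraph V₂} {r₁ : V₁} {r₂ : V₂}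

@[simp]
theorem compGraph_adj_inl_inl {a b : V₁} :
    (compGraph T₁ T₂ r₁ r₂).Adj (.inl a) (.inl b) ↔ T₁.Adj a b := by
  simpa [compGraph, treeCompRel, T₁.adj_comm b a] using fun h : T₁.Adj a b => h.ne

@[simp]
theorem compGraph_adj_inr_inr {a b : V₂} :
    (compGraph T₁ T₂ r₁ r₂).Adj (.inr a) (.inr b) ↔ T₂.Adj a b := by
  simpa [compGraph, treeCompRel, T₂.adj_comm b a] using fun h : T₂.Adj a b => h.ne

@[simp]
theorem compGraph_adj_inl_inr {a : V₁} {b : V₂} :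
    (compGraph T₁ T₂ r₁ r₂).Adj (.inl a) (.inr b) ↔ a = r₁ ∧ b = r₂ := by
  simp [compGraph, treeCompRel]

@[simp]
theorem compGraph_adj_inr_inl {a : V₂} {b : V₁} :
    (compGraph T₁ T₂ r₁ r₂).Adj (.inr a) (.inl b) ↔ a = r₂ ∧ b = r₁ := by
  rw [SimpleGraph.adj_comm, compGraph_adj_inl_inr, and_comm]

variable [Fintype V₁] [Fintype V₂] {f : V₁ ⊕ V₂ → ℕ}

theorem nbrSum_compGraph_inl (v : V₁) :
    nbrSum (compGraph T₁ T₂ r₁ r₂) f (.inl v) =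
      nbrSum T₁ (f ∘ Sum.inl) v + if v = r₁ then f (.inr r₂) else 0 := by
  simp only [nbrSum, Finset.sum_filter, Fintype.sum_sum_type, compGraph_adj_inl_inl,
    compGraph_adj_inl_inr, Function.comp_apply]
  by_cases h : v = r₁ <;> simp [h]

theorem nbrSum_compGraph_inr (v : V₂) :
    nbrSum (compGraph T₁ T₂ r₁ r₂) f (.inr v) =
      (if v = r₂ then f (.inl r₁) else 0) + nbrSum T₂ (f ∘ Sum.inr) v := by
  simp only [nbrSum, Finset.sum_filter, Fintype.sum_sum_type, compGraph_adj_inr_inr,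
    compGraph_adj_inr_inl, Function.comp_apply]
  by_cases h : v = r₂ <;> simp [h]

variable (hf : IsIR2DF (compGraph T₁ T₂ r₁ r₂) f)
include hf

theorem IsIR2DF.compGraph_inr_root_eq_zero (hr₁ : f (.inl r₁) ≠ 0) : f (.inr r₂) = 0 :=
  (hf.2 (compGraph_adj_inl_inr.2 ⟨rfl, rfl⟩)).resolve_left hr₁

theorem IsIR2DF.compGraph_inl (hr₁ : f (.inl r₁) ≠ 0) : IsIR2DF T₁ (f ∘ Sum.inl) :=
  hf.comp_hom ⟨Sum.inl, compGraph_adj_inl_inl.2⟩ fun v hv => by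
    have hne : v ≠ r₁ := by rintro rfl; exact hr₁ hv
    simpa [nbrSum_compGraph_inl, hne] using hf.1.2 _ hv

theorem IsIR2DF.compGraph_inr_iff :
    IsIR2DF T₂ (f ∘ Sum.inr) ↔ (f (.inr r₂) = 0 → 2 ≤ nbrSum T₂ (f ∘ Sum.inr) r₂) := by
  refine ⟨fun h => h.1.2 r₂, fun hroot => ?_⟩
  refine hf.comp_hom ⟨Sum.inr, compGraph_adj_inr_inr.2⟩ fun v hv => ?_
  by_cases hne : v = r₂
  · subst hne; exact hroot hv
  · simpa [nbrSum_compGraph_inr, hne] using hf.1.2 _ hv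

theorem IsIR2DF.compGraph_delVert [DecidableEq V₂] (hr₂ : f (.inr r₂) = 0) :
    IsIR2DF (delVert T₂ r₂) ((f ∘ Sum.inr) ∘ Subtype.val) := by
  let φ : delVert T₂ r₂ →g compGraph T₁ T₂ r₁ r₂ :=
    ⟨Sum.inr ∘ Subtype.val, fun h => compGraph_adj_inr_inr.2 h⟩
  refine hf.comp_hom φ fun v hv => ?_
  change 2 ≤ nbrSum (delVert T₂ r₂) ((f ∘ Sum.inr) ∘ Subtype.val) v
  rw [nbrSum_delVert T₂ hr₂]
  simpa [nbrSum_compGraph_inr, v.2] using hf.1.2 (.inr v) hv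

end Composition

theorem stmt_7_general {V₁ V₂ : Type*} [Fintype V₁] [Fintype V₂] [DecidableEq V₂]
    (T₁ : SimpleGraph V₁) (T₂ : SimpleGraph V₂)
    (r₁ : V₁) (r₂ : V₂)
    (f : V₁ ⊕ V₂ → ℕ) (hf : IsIR2DF (compGraph T₁ T₂ r₁ r₂) f)
    (h1 : f (Sum.inl r₁) = 1) :
    IsIR2DF T₁ (fun v => f (Sum.inl v)) ∧ (fun v => f (Sum.inl v)) r₁ = 1 ∧
      f (Sum.inr r₂) = 0 ∧
      (IsIR2DF T₂ (fun v => f (Sum.inr v)) ∨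
        (¬ IsIR2DF T₂ (fun v => f (Sum.inr v)) ∧
          closedNbrSum T₂ (fun v => f (Sum.inr v)) r₂ = 1 ∧
          IsIR2DF (delVert T₂ r₂) (fun v => f (Sum.inr v.1)))) := by
  have hr₁ : f (.inl r₁) ≠ 0 := by omega
  have hr₂ := hf.compGraph_inr_root_eq_zero hr₁
  refine ⟨hf.compGraph_inl hr₁, h1, hr₂, ?_⟩
  by_cases hroot : 2 ≤ nbrSum T₂ (f ∘ Sum.inr) r₂
  · exact .inl (hf.compGraph_inr_iff.2 fun _ => hroot)
  · have hsum : nbrSum T₂ (f ∘ Sum.inr) r₂ = 1 := by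
      have := hf.1.2 _ hr₂
      rw [nbrSum_compGraph_inr, if_pos rfl, h1] at this
      omega
    refine .inr ⟨fun h => hroot (hf.compGraph_inr_iff.1 h hr₂), ?_, hf.compGraph_delVert hr₂⟩
    rw [closedNbrSum, hr₂, zero_add]
    exact hsum

theorem stmt_7 {V₁ V₂ : Type*} [Fintype V₁] [Fintype V₂] [DecidableEq V₁] [DecidableEq V₂]
    (T₁ : SimpleGraph V₁) (T₂ : SimpleGraph V₂) (hT₁ : T₁.IsTree) (hT₂ : T₂.IsTree)
    (r₁ : V₁) (r₂ : V₂)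
    (f : V₁ ⊕ V₂ → ℕ) (hf : IsIR2DF (compGraph T₁ T₂ r₁ r₂) f)
    (h1 : f (Sum.inl r₁) = 1) :
    IsIR2DF T₁ (fun v => f (Sum.inl v)) ∧ (fun v => f (Sum.inl v)) r₁ = 1 ∧
      f (Sum.inr r₂) = 0 ∧
      (IsIR2DF T₂ (fun v => f (Sum.inr v)) ∨
        (¬ IsIR2DF T₂ (fun v => f (Sum.inr v)) ∧
          closedNbrSum T₂ (fun v => f (Sum.inr v)) r₂ = 1 ∧
          IsIR2DF (delVert T₂ r₂) (fun v => f (Sum.inr v.1)))) :=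
  stmt_7_general T₁ T₂ r₁ r₂ f hf h1
end

section
/- Let G be a connected block graph that is not complete and T_G its block-cutpoint tree. Suppose f_* : V(T_G) → {0,1,2} satisfies: (1) f_*(h) ∈ {0,1} for type-1 block-vertices, (2) f_*(h) = 0 for block-vertices of type 0 or 2, (3) for every cut-vertex v with f_*(v) = 0 there is u ∈ N²_{T_G}(v) with f_*(u) = 2 or two vertices u₁,u₂ ∈ N²_{T_G}(v) with f_*(u₁) = f_*(u₂) = 1, and (4) for every type-1 or type-2 block-vertex h with f_*(h) = 0 there is u ∈ N_{T_G}(h) with f_*(u) = 2 or u₁,u₂ ∈ N_{T_G}(h) with f_*(u₁) = f_*(u₂) = 1. Then the function f on G defined by f(v) = f_*(v) for cut-vertices v and f(v) = f_*(h) for non-cut-vertices v in block H is a Roman {2}-dominating function of G of the same total weight as f_*. -/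
open scoped Classical

open Finset

/-- `v` is a cut-vertex: deleting it disconnects the graph. -/
def IsCutVertex {V : Type*} (G : SimpleGraph V) (v : V) : Prop :=
  ¬ (SimpleGraph.induce {u : V | u ≠ v} G).Preconnected

/-- A graph with no cut-vertex. -/
def HasNoCutVertex {V : Type*} (G : SimpleGraph V) : Prop :=
  ∀ v, ¬ IsCutVertex G v

/-- `B` is a block of `G`: a maximal set inducing a connected subgraph without cut-vertices. -/
def IsBlock {V : Type*} (G : SimpleGraph V) (B : Set V) : Prop :=
  B.Nonempty ∧ (SimpleGraph.induce B G).Connected ∧ HasNoCutVertex (SimpleGraph.induce B G) ∧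
    ∀ B' : Set V, B ⊆ B' → (SimpleGraph.induce B' G).Connected →
      HasNoCutVertex (SimpleGraph.induce B' G) → B' = B

/-- The set of cut-vertices of `G` lying in `B`. -/
def cutSet {V : Type*} (G : SimpleGraph V) (B : Set V) : Set V :=
  {v ∈ B | IsCutVertex G v}

/-- `G` is a block graph: every block is a clique. -/
def IsBlockGraph {V : Type*} (G : SimpleGraph V) : Prop :=
  ∀ B : Set V, IsBlock G B → G.IsClique B

/-- Vertices of the block-cutpoint tree: cut-vertices plus one vertex per block. -/
abbrev BCVert {V : Type*} (G : SimpleGraph V) : Type _ :=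
  {v : V // IsCutVertex G v} ⊕ {B : Set V // IsBlock G B}

/-- Relation generating the block-cutpoint tree: a cut-vertex is joined to each block containing it. -/
def bcRel {V : Type*} (G : SimpleGraph V) : BCVert G → BCVert G → Prop
  | .inl v, .inr B => v.1 ∈ B.1
  | _, _ => False

/-- The block-cutpoint tree of `G`. -/
def bcGraph {V : Type*} (G : SimpleGraph V) : SimpleGraph (BCVert G) :=
  SimpleGraph.fromRel (bcRel G)

/-- The induced function `f⋆` on the block-cutpoint tree: the value of `f` at cut-vertices,
and `f(H) - f(I)` (the sum of `f` over non-cut-vertices of `H`) at block-vertices. -/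
noncomputable def fstar {V : Type*} [Fintype V] (G : SimpleGraph V) (f : V → ℕ) :
    BCVert G → ℕ
  | .inl v => f v.1
  | .inr B => ∑ v ∈ B.1.toFinset.filter (fun v => ¬ IsCutVertex G v), f v

/-- `y` lies in the closed second neighborhood `N²[x]` of `x`. -/
def InN2 {W : Type*} (H : SimpleGraph W) (x y : W) : Prop :=
  x = y ∨ H.Adj x y ∨ ∃ z, H.Adj x z ∧ H.Adj z y

/-!
A non-cut-vertex `w` of a block graph lies in exactly one block: if it lay in two blocks `B₁`,
`B₂`, a path from `B₂ \ B₁` to `B₁ \ B₂` avoiding `w` would close a cycle through `w` whose union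
with the clique `B₁` is still connected without cut-vertices, contradicting the maximality of `B₁`.
So `f` copies the value of each block onto its non-cut-vertices, and since blocks not of type 1
have value `0`, the weights of `f` and `fσ` agree.

For domination, every node `x` of the tree with `fσ x ≠ 0` has a representative vertex of `G`
with the same `f`-value (the cut-vertex itself, or the non-cut-vertex of the block), and distinct
nodes have distinct representatives. The representative of a node in `N²[v]` of a cut-vertex `v`,
or adjacent to the block of a non-cut-vertex `v`, lies in a block together with `v`, hence is a
neighbour of `v` because blocks are cliques.
-/

namespace SimpleGraph

variable {V : Type*} {G : SimpleGraph V}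

lemma Walk.IsPath.notMem_support_takeUntil_or_dropUntil {u v a z : V} {q : G.Walk u v}
    (hq : q.IsPath) (ha : a ∈ q.support) (haz : a ≠ z) :
    z ∉ (q.takeUntil a ha).support ∨ z ∉ (q.dropUntil a ha).support := by
  by_contra! h
  have hnodup := hq.support_nodup
  rw [← q.take_spec ha, Walk.support_append] at hnodup
  have hz : z ∈ (q.dropUntil a ha).support.tail := by
    have hz := h.2
    rw [← Walk.cons_tail_support] at hz
    exact (List.mem_cons.mp hz).resolve_left (Ne.symm haz)
  exact List.disjoint_of_nodup_append hnodup h.1 hz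

lemma preconnected_induce_of_forall_walk_to_clique {K T : Set V} (hK : G.IsClique K)
    (hKT : K ⊆ T) (h : ∀ a ∈ T, ∃ k ∈ K, ∃ p : G.Walk a k, ∀ x ∈ p.support, x ∈ T) :
    (G.induce T).Preconnected := by
  have reach_K : ∀ a : T, ∃ k : K, (G.induce T).Reachable a ⟨k, hKT k.2⟩ := fun a => by
    obtain ⟨k, hk, p, hp⟩ := h a a.2
    exact ⟨⟨k, hk⟩, (p.induce T hp).reachable⟩
  intro a b
  obtain ⟨k, hak⟩ := reach_K a
  obtain ⟨k', hbk'⟩ := reach_K b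
  have hkk' : (G.induce T).Reachable ⟨k, hKT k.2⟩ ⟨k', hKT k'.2⟩ := by
    by_cases hk : k.1 = k'.1
    · simp only [hk, Reachable.refl]
    · exact Adj.reachable (hK k.2 k'.2 hk)
  exact hak.trans (hkk'.trans hbk'.symm)

lemma IsClique.connected_induce_union_support {B : Set V} (hB : G.IsClique B) {u v : V}
    (hu : u ∈ B) (q : G.Walk u v) : (G.induce (B ∪ {x | x ∈ q.support})).Connected := by
  have : Nonempty ↥(B ∪ {x | x ∈ q.support}) := ⟨⟨u, .inl hu⟩⟩
  refine ⟨preconnected_induce_of_forall_walk_to_clique hB Set.subset_union_left ?_⟩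
  rintro a (ha | ha)
  · exact ⟨a, ha, .nil, by simp [ha]⟩
  · refine ⟨u, hu, (q.takeUntil a ha).reverse, fun x hx => Or.inr ?_⟩
    rw [Walk.support_reverse, List.mem_reverse] at hx
    exact q.support_takeUntil_subset_support ha hx

end SimpleGraph

open SimpleGraph

section Blocks

variable {V : Type*} {G : SimpleGraph V}

lemma mem_sdiff_cutSet {B : Set V} {w : V} :
    w ∈ B \ cutSet G B ↔ w ∈ B ∧ ¬ IsCutVertex G w := by
  simp [cutSet]

lemma ncard_sdiff_cutSet_add_ncard [Finite V] (B : Set V) :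
    (B \ cutSet G B).ncard + (cutSet G B).ncard = B.ncard :=
  Set.ncard_sdiff_add_ncard_of_subset fun _ h => h.1

lemma ncard_cutSet_lt_of_mem [Finite V] {B : Set V} {v : V} (hvB : v ∈ B)
    (hv : ¬ IsCutVertex G v) : (cutSet G B).ncard + 1 ≤ B.ncard := by
  have hpos := (Set.ncard_pos).mpr ⟨v, mem_sdiff_cutSet.mpr ⟨hvB, hv⟩⟩
  have := ncard_sdiff_cutSet_add_ncard (G := G) B
  omega

lemma hasNoCutVertex_induce {S : Set V}
    (h : ∀ z ∈ S, (G.induce (S \ {z})).Preconnected) : HasNoCutVertex (G.induce S) :=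
  fun z hz => hz <| (h z z.2).map
    ⟨fun x => ⟨⟨x.1, x.2.1⟩, fun hx => x.2.2 (congrArg Subtype.val hx)⟩, fun h => h⟩
    (fun y => ⟨⟨y.1.1, y.1.2, fun hmem => y.2 (Subtype.ext hmem)⟩, rfl⟩)

/-- After deleting `z`, each vertex of the path still reaches `u` or `v` on the side of the path
that avoids `z`. -/
lemma SimpleGraph.IsClique.hasNoCutVertex_induce_union_support {B : Set V} (hB : G.IsClique B)
    {u v : V} (hu : u ∈ B) (hv : v ∈ B) {q : G.Walk u v} (hq : q.IsPath) :
    HasNoCutVertex (G.induce (B ∪ {x | x ∈ q.support})) := by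
  refine hasNoCutVertex_induce fun z _ => preconnected_induce_of_forall_walk_to_clique
    (hB.subset Set.sdiff_subset) (Set.sdiff_subset_sdiff_left Set.subset_union_left) ?_
  rintro a ⟨ha | ha, haz⟩ <;> rw [Set.mem_singleton_iff] at haz
  · exact ⟨a, ⟨ha, haz⟩, .nil, by simp [ha, haz]⟩
  rcases hq.notMem_support_takeUntil_or_dropUntil ha haz with hz | hz
  · refine ⟨u, ⟨hu, fun h => hz (h ▸ Walk.start_mem_support _)⟩,
      (q.takeUntil a ha).reverse, fun x hx => ?_⟩
    rw [Walk.support_reverse, List.mem_reverse] at hx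
    exact ⟨.inr (q.support_takeUntil_subset_support ha hx), fun h => hz (h ▸ hx)⟩
  · refine ⟨v, ⟨hv, fun h => hz (h ▸ Walk.end_mem_support _)⟩, q.dropUntil a ha,
      fun x hx => ⟨.inr (q.support_dropUntil_subset_support ha hx), fun h => hz (h ▸ hx)⟩⟩

lemma exists_isPath_notMem_support_of_not_isCutVertex {w a b : V} (hw : ¬ IsCutVertex G w)
    (ha : a ≠ w) (hb : b ≠ w) : ∃ p : G.Walk a b, p.IsPath ∧ w ∉ p.support := by
  obtain ⟨p⟩ := (not_not.mp hw) ⟨a, ha⟩ ⟨b, hb⟩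
  let q : G.Walk a b := p.map (Embedding.induce _).toHom
  refine ⟨q.bypass, q.bypass_isPath, fun hw' => ?_⟩
  have hwq : w ∈ (p.map (Embedding.induce _).toHom).support :=
    q.support_bypass_subset_support hw'
  rw [Walk.support_map, List.mem_map] at hwq
  obtain ⟨y, -, hy⟩ := hwq
  exact y.2 hy

lemma IsBlock.eq_of_mem_of_not_isCutVertex (hbg : IsBlockGraph G) {B₁ B₂ : Set V}
    (hB₁ : IsBlock G B₁) (hB₂ : IsBlock G B₂) {w : V} (hw₁ : w ∈ B₁) (hw₂ : w ∈ B₂)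
    (hw : ¬ IsCutVertex G w) : B₁ = B₂ := by
  by_contra hne
  obtain ⟨b₁, hb₁, hb₁₂⟩ :=
    Set.not_subset.mp fun h => hne (hB₁.2.2.2 B₂ h hB₂.2.1 hB₂.2.2.1).symm
  obtain ⟨b₂, hb₂, hb₂₁⟩ := Set.not_subset.mp fun h => hne (hB₂.2.2.2 B₁ h hB₁.2.1 hB₁.2.2.1)
  have hb₁w : b₁ ≠ w := by rintro rfl; exact hb₁₂ hw₂
  have hb₂w : b₂ ≠ w := by rintro rfl; exact hb₂₁ hw₁
  obtain ⟨p, hp, hwp⟩ := exists_isPath_notMem_support_of_not_isCutVertex hw hb₂w hb₁w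
  let q : G.Walk w b₁ := .cons (hbg B₂ hB₂ hw₂ hb₂ hb₂w.symm) p
  have hB₁q : G.IsClique B₁ := hbg B₁ hB₁
  have hS := hB₁.2.2.2 _ Set.subset_union_left (hB₁q.connected_induce_union_support hw₁ q)
    (hB₁q.hasNoCutVertex_induce_union_support hw₁ hb₁ (hp.cons hwp))
  exact hb₂₁ (hS ▸ Or.inr (by simp [q]))

lemma exists_isBlock_mem [Finite V] (v : V) : ∃ B : Set V, IsBlock G B ∧ v ∈ B := by
  let P : Set V → Prop := fun S => (G.induce S).Connected ∧ HasNoCutVertex (G.induce S)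
  have hP : P {v} := by
    refine ⟨?_, fun z hz => hz fun a b => ?_⟩
    · rw [induce_singleton_eq_top]; exact connected_top
    · exact absurd (Subtype.ext (a.1.2.trans z.2.symm)) a.2
  obtain ⟨B, hvB, hB⟩ := Finite.exists_le_maximal hP
  exact ⟨B, ⟨⟨v, hvB rfl⟩, hB.prop.1, hB.prop.2,
    fun B' h hc hn => (hB.eq_of_le ⟨hc, hn⟩ h).symm⟩, hvB rfl⟩

end Blocks

section BlockCutpointTree

variable {V : Type*} {G : SimpleGraph V}

@[simp]
lemma bcGraph_adj_inl_inr {v : {v : V // IsCutVertex G v}} {B : {B : Set V // IsBlock G B}} :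
    (bcGraph G).Adj (.inl v) (.inr B) ↔ v.1 ∈ B.1 := by
  simp [bcGraph, bcRel]

@[simp]
lemma bcGraph_adj_inr_inl {v : {v : V // IsCutVertex G v}} {B : {B : Set V // IsBlock G B}} :
    (bcGraph G).Adj (.inr B) (.inl v) ↔ v.1 ∈ B.1 := by
  simp [bcGraph, bcRel]

@[simp]
lemma not_bcGraph_adj_inl_inl {v w : {v : V // IsCutVertex G v}} :
    ¬ (bcGraph G).Adj (.inl v) (.inl w) := by
  simp [bcGraph, bcRel]

@[simp]
lemma not_bcGraph_adj_inr_inr {B C : {B : Set V // IsBlock G B}} :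
    ¬ (bcGraph G).Adj (.inr B) (.inr C) := by
  simp [bcGraph, bcRel]

/-- The vertex of `G` that carries the value of a node of the block-cutpoint tree. -/
noncomputable def bcRep : BCVert G → V
  | .inl v => v.1
  | .inr B => if h : ∃ w ∈ B.1, ¬ IsCutVertex G w then h.choose else B.2.1.some

lemma bcRep_inr_mem (B : {B : Set V // IsBlock G B}) : bcRep (.inr B) ∈ B.1 := by
  dsimp only [bcRep]
  split_ifs with h
  · exact h.choose_spec.1
  · exact B.2.1.some_mem

lemma bcRep_inr_not_isCutVertex {B : {B : Set V // IsBlock G B}}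
    (h : ∃ w ∈ B.1, ¬ IsCutVertex G w) : ¬ IsCutVertex G (bcRep (.inr B)) := by
  simp only [bcRep, dif_pos h]
  exact h.choose_spec.2

lemma exists_mem_bcRep_of_inN2 {v : {v : V // IsCutVertex G v}} {u : BCVert G}
    (h : InN2 (bcGraph G) (.inl v) u) :
    u = .inl v ∨ ∃ B : {B : Set V // IsBlock G B}, v.1 ∈ B.1 ∧ bcRep u ∈ B.1 := by
  rcases h with rfl | h | ⟨z, h₁, h₂⟩
  · exact .inl rfl
  · rcases u with w | B
    · simp at h
    · exact .inr ⟨B, bcGraph_adj_inl_inr.mp h, bcRep_inr_mem B⟩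
  · rcases z with w | B
    · simp at h₁
    rcases u with w | C
    · exact .inr ⟨B, bcGraph_adj_inl_inr.mp h₁, bcGraph_adj_inr_inl.mp h₂⟩
    · simp at h₂

def VanishesOffTypeOneBlocks (fσ : BCVert G → ℕ) : Prop :=
  ∀ B hB, (B \ cutSet G B).ncard ≠ 1 → fσ (.inr ⟨B, hB⟩) = 0

lemma VanishesOffTypeOneBlocks.exists_mem_not_isCutVertex [Finite V] {fσ : BCVert G → ℕ}
    (hfσ : VanishesOffTypeOneBlocks fσ) {B : {B : Set V // IsBlock G B}} (h : fσ (.inr B) ≠ 0) :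
    ∃ w ∈ B.1, ¬ IsCutVertex G w := by
  have hpos : 0 < (B.1 \ cutSet G B.1).ncard := by
    have := mt (hfσ B.1 B.2) h
    omega
  obtain ⟨w, hw⟩ := (Set.ncard_pos).mp hpos
  exact ⟨w, mem_sdiff_cutSet.mp hw⟩

lemma VanishesOffTypeOneBlocks.bcRep_injOn [Finite V] (hbg : IsBlockGraph G)
    {fσ : BCVert G → ℕ} (hfσ : VanishesOffTypeOneBlocks fσ) {x y : BCVert G} (hx : fσ x ≠ 0)
    (hy : fσ y ≠ 0) (h : bcRep x = bcRep y) : x = y := by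
  rcases x with v | B <;> rcases y with w | C
  · exact congrArg Sum.inl (Subtype.ext h)
  · exact absurd (h ▸ v.2) (bcRep_inr_not_isCutVertex (hfσ.exists_mem_not_isCutVertex hy))
  · exact absurd (h ▸ w.2) (bcRep_inr_not_isCutVertex (hfσ.exists_mem_not_isCutVertex hx))
  · have hB := bcRep_inr_not_isCutVertex (hfσ.exists_mem_not_isCutVertex hx)
    exact congrArg Sum.inr <| Subtype.ext <| IsBlock.eq_of_mem_of_not_isCutVertex hbg B.2 C.2
      (bcRep_inr_mem B) (h ▸ bcRep_inr_mem C) hB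

end BlockCutpointTree

section Roman

variable {V : Type*} [Fintype V] {G : SimpleGraph V}

lemma le_nbrSum_of_adj {f : V → ℕ} {v w : V} (h : G.Adj v w) : f w ≤ nbrSum G f v :=
  Finset.single_le_sum (fun _ _ => Nat.zero_le _) (by simp [h])

lemma add_le_nbrSum_of_adj_of_adj {f : V → ℕ} {v w₁ w₂ : V} (h₁ : G.Adj v w₁)
    (h₂ : G.Adj v w₂) (hne : w₁ ≠ w₂) : f w₁ + f w₂ ≤ nbrSum G f v := by
  rw [← Finset.sum_pair hne]
  exact Finset.sum_le_sum_of_subset fun x hx => by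
    rcases Finset.mem_insert.mp hx with rfl | hx
    · simp [h₁]
    · simp [Finset.mem_singleton.mp hx, h₂]

lemma two_le_nbrSum_of_map {W : Type*} {P : W → Prop} {g : W → ℕ} {f : V → ℕ} {v : V}
    (ρ : W → V) (hρ : ∀ u, P u → g u ≠ 0 → G.Adj v (ρ u) ∧ f (ρ u) = g u)
    (hinj : ∀ u₁ u₂, g u₁ ≠ 0 → g u₂ ≠ 0 → ρ u₁ = ρ u₂ → u₁ = u₂)
    (h : (∃ u, P u ∧ g u = 2) ∨ ∃ u₁ u₂, u₁ ≠ u₂ ∧ P u₁ ∧ P u₂ ∧ g u₁ = 1 ∧ g u₂ = 1) :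
    2 ≤ nbrSum G f v := by
  rcases h with ⟨u, hu, hg⟩ | ⟨u₁, u₂, hne, hu₁, hu₂, hg₁, hg₂⟩
  · obtain ⟨hadj, hf⟩ := hρ u hu (by omega)
    exact hg ▸ hf ▸ le_nbrSum_of_adj hadj
  · obtain ⟨hadj₁, hf₁⟩ := hρ u₁ hu₁ (by omega)
    obtain ⟨hadj₂, hf₂⟩ := hρ u₂ hu₂ (by omega)
    have hne' : ρ u₁ ≠ ρ u₂ := fun h => hne (hinj u₁ u₂ (by omega) (by omega) h)
    have := add_le_nbrSum_of_adj_of_adj (f := f) hadj₁ hadj₂ hne'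
    omega

end Roman

section Expansion

variable {V : Type*} [Fintype V] {G : SimpleGraph V} {fσ : BCVert G → ℕ} {f : V → ℕ}

lemma apply_bcRep (hfc : ∀ v : V, ∀ hv : IsCutVertex G v, f v = fσ (.inl ⟨v, hv⟩))
    (hfb : ∀ B : Set V, ∀ hB : IsBlock G B, ∀ v ∈ B, ¬ IsCutVertex G v →
      f v = fσ (.inr ⟨B, hB⟩))
    (hfσ : VanishesOffTypeOneBlocks fσ) {x : BCVert G} (hx : fσ x ≠ 0) :
    f (bcRep x) = fσ x := by
  rcases x with v | B
  · exact hfc v.1 v.2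
  · exact hfb B.1 B.2 _ (bcRep_inr_mem B)
      (bcRep_inr_not_isCutVertex (hfσ.exists_mem_not_isCutVertex hx))

lemma two_le_nbrSum_of_isCutVertex (hbg : IsBlockGraph G)
    (hfc : ∀ v : V, ∀ hv : IsCutVertex G v, f v = fσ (.inl ⟨v, hv⟩))
    (hfb : ∀ B : Set V, ∀ hB : IsBlock G B, ∀ v ∈ B, ¬ IsCutVertex G v →
      f v = fσ (.inr ⟨B, hB⟩))
    (hfσ : VanishesOffTypeOneBlocks fσ) {v : V} (hv : IsCutVertex G v) (hv0 : f v = 0)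
    (h : (∃ u, InN2 (bcGraph G) (.inl ⟨v, hv⟩) u ∧ fσ u = 2) ∨
      ∃ u₁ u₂, u₁ ≠ u₂ ∧ InN2 (bcGraph G) (.inl ⟨v, hv⟩) u₁ ∧
        InN2 (bcGraph G) (.inl ⟨v, hv⟩) u₂ ∧ fσ u₁ = 1 ∧ fσ u₂ = 1) :
    2 ≤ nbrSum G f v := by
  refine two_le_nbrSum_of_map bcRep (fun u hu hu0 => ?_) (fun _ _ => hfσ.bcRep_injOn hbg) h
  have hf := apply_bcRep hfc hfb hfσ hu0
  rcases exists_mem_bcRep_of_inN2 hu with rfl | ⟨B, hvB, huB⟩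
  · exact absurd ((hfc v hv).symm.trans hv0) hu0
  · exact ⟨hbg B.1 B.2 hvB huB fun h => hu0 (by rw [← hf, ← h, hv0]), hf⟩

lemma two_le_nbrSum_of_mem_isBlock (hbg : IsBlockGraph G)
    (hfc : ∀ v : V, ∀ hv : IsCutVertex G v, f v = fσ (.inl ⟨v, hv⟩))
    (hfσ : VanishesOffTypeOneBlocks fσ) {B : Set V} (hB : IsBlock G B) {v : V} (hvB : v ∈ B)
    (hv0 : f v = 0)
    (h : (∃ u, (bcGraph G).Adj (.inr ⟨B, hB⟩) u ∧ fσ u = 2) ∨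
      ∃ u₁ u₂, u₁ ≠ u₂ ∧ (bcGraph G).Adj (.inr ⟨B, hB⟩) u₁ ∧
        (bcGraph G).Adj (.inr ⟨B, hB⟩) u₂ ∧ fσ u₁ = 1 ∧ fσ u₂ = 1) :
    2 ≤ nbrSum G f v := by
  refine two_le_nbrSum_of_map bcRep (fun u hu hu0 => ?_) (fun _ _ => hfσ.bcRep_injOn hbg) h
  rcases u with w | C
  · have hf : f w.1 = fσ (.inl w) := hfc w.1 w.2
    exact ⟨hbg B hB hvB (bcGraph_adj_inr_inl.mp hu) fun h => hu0 (by rw [← hf, ← hv0, h]; rfl),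
      hf⟩
  · simp at hu

lemma sum_filter_mem_not_isCutVertex
    (hfb : ∀ B : Set V, ∀ hB : IsBlock G B, ∀ v ∈ B, ¬ IsCutVertex G v →
      f v = fσ (.inr ⟨B, hB⟩))
    (hfσ : VanishesOffTypeOneBlocks fσ) (B : Set V) (hB : IsBlock G B) :
    ∑ w ∈ univ.filter (fun w => w ∈ B ∧ ¬ IsCutVertex G w), f w = fσ (.inr ⟨B, hB⟩) := by
  rw [Finset.sum_congr rfl fun w hw => hfb B hB w (Finset.mem_filter.mp hw).2.1
    (Finset.mem_filter.mp hw).2.2, Finset.sum_const, smul_eq_mul]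
  have hcard : (univ.filter (fun w => w ∈ B ∧ ¬ IsCutVertex G w)).card =
      (B \ cutSet G B).ncard := by
    rw [← Set.ncard_coe_finset]
    congr 1
    ext w
    simp [cutSet]
  by_cases h1 : (B \ cutSet G B).ncard = 1
  · rw [hcard, h1, one_mul]
  · rw [hfσ B hB h1, mul_zero]

lemma sum_filter_not_isCutVertex_eq_sum_isBlock {M : Type*} [AddCommMonoid M]
    (hbg : IsBlockGraph G) (g : V → M) :
    ∑ w ∈ univ.filter (fun w => ¬ IsCutVertex G w), g w =
      ∑ B : {B : Set V // IsBlock G B},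
        ∑ w ∈ univ.filter (fun w => w ∈ B.1 ∧ ¬ IsCutVertex G w), g w := by
  have hunique : ∀ w, ¬ IsCutVertex G w →
      ∑ B : {B : Set V // IsBlock G B}, (if w ∈ B.1 then g w else 0) = g w := by
    intro w hw
    obtain ⟨B, hB, hwB⟩ := exists_isBlock_mem (G := G) w
    rw [Fintype.sum_eq_single ⟨B, hB⟩ fun C hC => if_neg fun hwC => hC <| Subtype.ext <|
      IsBlock.eq_of_mem_of_not_isCutVertex hbg C.2 hB hwC hwB hw, if_pos hwB]
  calc ∑ w ∈ univ.filter (fun w => ¬ IsCutVertex G w), g w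
      = ∑ w ∈ univ.filter (fun w => ¬ IsCutVertex G w),
          ∑ B : {B : Set V // IsBlock G B}, (if w ∈ B.1 then g w else 0) :=
        Finset.sum_congr rfl fun w hw => (hunique w (Finset.mem_filter.mp hw).2).symm
    _ = _ := by
        rw [Finset.sum_comm]
        simp only [← Finset.sum_filter, Finset.filter_filter, and_comm]

lemma sum_eq_sum_bcVert (hbg : IsBlockGraph G)
    (hfc : ∀ v : V, ∀ hv : IsCutVertex G v, f v = fσ (.inl ⟨v, hv⟩))
    (hfb : ∀ B : Set V, ∀ hB : IsBlock G B, ∀ v ∈ B, ¬ IsCutVertex G v →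
      f v = fσ (.inr ⟨B, hB⟩))
    (hfσ : VanishesOffTypeOneBlocks fσ) :
    ∑ v, f v = ∑ x, fσ x := by
  rw [← Finset.sum_filter_add_sum_filter_not univ (IsCutVertex G), Fintype.sum_sum_type,
    sum_filter_not_isCutVertex_eq_sum_isBlock hbg]
  congr 1
  · rw [Finset.sum_subtype (p := IsCutVertex G) _ (fun _ => by simp) f]
    exact Finset.sum_congr rfl fun v _ => hfc v.1 v.2
  · exact Fintype.sum_congr _ _ fun B => sum_filter_mem_not_isCutVertex hfb hfσ B.1 B.2

end Expansion

theorem stmt_14_general {V : Type*} [Fintype V] (G : SimpleGraph V)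
    (hbg : IsBlockGraph G)
    (fσ : BCVert G → ℕ) (hb : ∀ x, fσ x ≤ 2)
    (h2 : ∀ B : Set V, ∀ hB : IsBlock G B,
      B.ncard = (cutSet G B).ncard ∨ (cutSet G B).ncard + 2 ≤ B.ncard →
      fσ (Sum.inr ⟨B, hB⟩) = 0)
    (h3 : ∀ v : V, ∀ hv : IsCutVertex G v, fσ (Sum.inl ⟨v, hv⟩) = 0 →
      (∃ u : BCVert G, InN2 (bcGraph G) (Sum.inl ⟨v, hv⟩) u ∧ fσ u = 2) ∨
      (∃ u₁ u₂ : BCVert G, u₁ ≠ u₂ ∧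
        InN2 (bcGraph G) (Sum.inl ⟨v, hv⟩) u₁ ∧ InN2 (bcGraph G) (Sum.inl ⟨v, hv⟩) u₂ ∧
        fσ u₁ = 1 ∧ fσ u₂ = 1))
    (h4 : ∀ B : Set V, ∀ hB : IsBlock G B, (cutSet G B).ncard + 1 ≤ B.ncard →
      fσ (Sum.inr ⟨B, hB⟩) = 0 →
      (∃ u : BCVert G, (bcGraph G).Adj (Sum.inr ⟨B, hB⟩) u ∧ fσ u = 2) ∨
      (∃ u₁ u₂ : BCVert G, u₁ ≠ u₂ ∧
        (bcGraph G).Adj (Sum.inr ⟨B, hB⟩) u₁ ∧ (bcGraph G).Adj (Sum.inr ⟨B, hB⟩) u₂ ∧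
        fσ u₁ = 1 ∧ fσ u₂ = 1))
    (f : V → ℕ)
    (hfc : ∀ v : V, ∀ hv : IsCutVertex G v, f v = fσ (Sum.inl ⟨v, hv⟩))
    (hfb : ∀ B : Set V, ∀ hB : IsBlock G B, ∀ v ∈ B, ¬ IsCutVertex G v →
      f v = fσ (Sum.inr ⟨B, hB⟩)) :
    IsR2DF G f ∧ ∑ v, f v = ∑ x, fσ x := by
  have hfσ : VanishesOffTypeOneBlocks fσ := fun B hB h =>
    h2 B hB (by have := ncard_sdiff_cutSet_add_ncard (G := G) B; omega)
  refine ⟨⟨fun v => ?_, fun v hv0 => ?_⟩, sum_eq_sum_bcVert hbg hfc hfb hfσ⟩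
  · by_cases hv : IsCutVertex G v
    · exact hfc v hv ▸ hb _
    · obtain ⟨B, hB, hvB⟩ := exists_isBlock_mem (G := G) v
      exact hfb B hB v hvB hv ▸ hb _
  · by_cases hv : IsCutVertex G v
    · exact two_le_nbrSum_of_isCutVertex hbg hfc hfb hfσ hv hv0 (h3 v hv (hfc v hv ▸ hv0))
    · obtain ⟨B, hB, hvB⟩ := exists_isBlock_mem (G := G) v
      exact two_le_nbrSum_of_mem_isBlock hbg hfc hfσ hB hvB hv0
        (h4 B hB (ncard_cutSet_lt_of_mem hvB hv) (hfb B hB v hvB hv ▸ hv0))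

theorem stmt_14 {V : Type*} [Fintype V] (G : SimpleGraph V)
    (hconn : G.Connected) (hbg : IsBlockGraph G)
    (hnc : ∃ a b : V, a ≠ b ∧ ¬ G.Adj a b)
    (fσ : BCVert G → ℕ) (hb : ∀ x, fσ x ≤ 2)
    (h1 : ∀ B : Set V, ∀ hB : IsBlock G B, B.ncard = (cutSet G B).ncard + 1 →
      fσ (Sum.inr ⟨B, hB⟩) ≤ 1)
    (h2 : ∀ B : Set V, ∀ hB : IsBlock G B,
      B.ncard = (cutSet G B).ncard ∨ (cutSet G B).ncard + 2 ≤ B.ncard →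
      fσ (Sum.inr ⟨B, hB⟩) = 0)
    (h3 : ∀ v : V, ∀ hv : IsCutVertex G v, fσ (Sum.inl ⟨v, hv⟩) = 0 →
      (∃ u : BCVert G, InN2 (bcGraph G) (Sum.inl ⟨v, hv⟩) u ∧ fσ u = 2) ∨
      (∃ u₁ u₂ : BCVert G, u₁ ≠ u₂ ∧
        InN2 (bcGraph G) (Sum.inl ⟨v, hv⟩) u₁ ∧ InN2 (bcGraph G) (Sum.inl ⟨v, hv⟩) u₂ ∧
        fσ u₁ = 1 ∧ fσ u₂ = 1))
    (h4 : ∀ B : Set V, ∀ hB : IsBlock G B, (cutSet G B).ncard + 1 ≤ B.ncard →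
      fσ (Sum.inr ⟨B, hB⟩) = 0 →
      (∃ u : BCVert G, (bcGraph G).Adj (Sum.inr ⟨B, hB⟩) u ∧ fσ u = 2) ∨
      (∃ u₁ u₂ : BCVert G, u₁ ≠ u₂ ∧
        (bcGraph G).Adj (Sum.inr ⟨B, hB⟩) u₁ ∧ (bcGraph G).Adj (Sum.inr ⟨B, hB⟩) u₂ ∧
        fσ u₁ = 1 ∧ fσ u₂ = 1))
    (f : V → ℕ)
    (hfc : ∀ v : V, ∀ hv : IsCutVertex G v, f v = fσ (Sum.inl ⟨v, hv⟩))
    (hfb : ∀ B : Set V, ∀ hB : IsBlock G B, ∀ v ∈ B, ¬ IsCutVertex G v →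
      f v = fσ (Sum.inr ⟨B, hB⟩)) :
    IsR2DF G f ∧ ∑ v, f v = ∑ x, fσ x :=
  stmt_14_general G hbg fσ hb h2 h3 h4 f hfc hfb
end

section
/- Let T = (T₁, r₁) ∘ (T₂, r₂) with root r = r₁. If f : V(T) → {0,1,2} satisfies: f(r₁) = 0, f is not an IR2DF of T, f restricted to T − r is an IR2DF of T − r, and f(N_T[r]) = 1, then exactly one of the following holds: (a) f(r₂) = 0, f|_{T₂} is an IR2DF of T₂, f|_{T₁} is not an IR2DF of T₁, f(N_{T₁}[r₁]) = 1, and f restricted to T₁ − r₁ is an IR2DF of T₁ − r₁; or (b) f(r₂) = 1, f|_{T₂} is an IR2DF of T₂, f|_{T₁} is not an IR2DF of T₁, f(N_{T₁}[r₁]) = 0, and f restricted to T₁ − r₁ is an IR2DF of T₁ − r₁. -/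
open scoped Classical

open Finset

/-! Since `f(r₁) = 0`, the weight of `N_T[r₁]` splits as `f(N_{T₁}[r₁]) + f(r₂) = 1`. Hence `f(r₂)`
is `0` or `1`, and `r₁` sees weight at most `1` in `T₁`, so `f|_{T₁}` fails to dominate it.
Deleting `r₁` from `T` leaves the disjoint union of `T₁ - r₁` and `T₂`, and an IR2DF restricts
to an IR2DF on any union of connected components. -/

section restrict

variable {V W : Type*} [Fintype V] [Fintype W] {G : SimpleGraph V} {H : SimpleGraph W}

lemma nbrSum_comp_embedding (φ : H ↪g G) {v : W} (hclosed : ∀ u, G.Adj (φ v) u → u ∈ Set.range φ)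
    (f : V → ℕ) : nbrSum H (f ∘ φ) v = nbrSum G f (φ v) := by
  have hnbrs : univ.filter (G.Adj (φ v)) = (univ.filter (H.Adj v)).map φ.toEmbedding := by
    ext u
    simp only [Finset.mem_map, Finset.mem_filter, Finset.mem_univ, true_and]
    constructor
    · intro hu
      obtain ⟨w, rfl⟩ := hclosed u hu
      exact ⟨w, φ.map_adj_iff.1 hu, rfl⟩
    · rintro ⟨w, hw, rfl⟩
      exact φ.map_adj_iff.2 hw
  rw [nbrSum, nbrSum, hnbrs, Finset.sum_map]
  rfl

lemma IsIR2DF.comp_embedding {f : V → ℕ} (hf : IsIR2DF G f) (φ : H ↪g G)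
    (hclosed : ∀ v u, G.Adj (φ v) u → u ∈ Set.range φ) : IsIR2DF H (f ∘ φ) := by
  refine ⟨⟨fun v => hf.1.1 (φ v), fun v hv => ?_⟩, fun u v huv => hf.2 (φ.map_adj_iff.2 huv)⟩
  rw [nbrSum_comp_embedding φ (hclosed v)]
  exact hf.1.2 (φ v) hv

end restrict

namespace compGraph

variable {V₁ V₂ : Type*} {T₁ : SimpleGraph V₁} {T₂ : SimpleGraph V₂} {r₁ : V₁} {r₂ : V₂}

@[simp] lemma adj_inl_inl {a b : V₁} :
    (compGraph T₁ T₂ r₁ r₂).Adj (.inl a) (.inl b) ↔ T₁.Adj a b := by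
  simp only [compGraph, SimpleGraph.fromRel_adj, treeCompRel, ne_eq, Sum.inl.injEq, T₁.adj_comm b a,
    or_self]
  exact and_iff_right_of_imp SimpleGraph.Adj.ne

@[simp] lemma adj_inr_inr {a b : V₂} :
    (compGraph T₁ T₂ r₁ r₂).Adj (.inr a) (.inr b) ↔ T₂.Adj a b := by
  simp only [compGraph, SimpleGraph.fromRel_adj, treeCompRel, ne_eq, Sum.inr.injEq, T₂.adj_comm b a,
    or_self]
  exact and_iff_right_of_imp SimpleGraph.Adj.ne

@[simp] lemma adj_inl_inr {a : V₁} {b : V₂} :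
    (compGraph T₁ T₂ r₁ r₂).Adj (.inl a) (.inr b) ↔ a = r₁ ∧ b = r₂ := by
  simp [compGraph, treeCompRel]

@[simp] lemma adj_inr_inl {a : V₂} {b : V₁} :
    (compGraph T₁ T₂ r₁ r₂).Adj (.inr a) (.inl b) ↔ b = r₁ ∧ a = r₂ := by
  simp [compGraph, treeCompRel]

variable (T₁ T₂ r₁ r₂)

def inrEmbedding : T₂ ↪g delVert (compGraph T₁ T₂ r₁ r₂) (.inl r₁) where
  toFun v := ⟨.inr v, Sum.inr_ne_inl⟩
  inj' _ _ h := Sum.inr_injective (congrArg Subtype.val h)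
  map_rel_iff' := adj_inr_inr

def inlEmbedding : delVert T₁ r₁ ↪g delVert (compGraph T₁ T₂ r₁ r₂) (.inl r₁) where
  toFun v := ⟨.inl v.1, by simpa using v.2⟩
  inj' _ _ h := Subtype.val_injective (Sum.inl_injective (congrArg Subtype.val h))
  map_rel_iff' := adj_inl_inl

variable {T₁ T₂ r₁ r₂} [Fintype V₁] [Fintype V₂]

lemma nbrSum_inl_root (f : V₁ ⊕ V₂ → ℕ) :
    nbrSum (compGraph T₁ T₂ r₁ r₂) f (.inl r₁) = nbrSum T₁ (fun v => f (.inl v)) r₁ + f (.inr r₂) := by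
  simp only [nbrSum, Finset.sum_filter, Fintype.sum_sum_type, adj_inl_inl, adj_inl_inr, true_and,
    Finset.sum_ite_eq', Finset.mem_univ, if_true]

variable [DecidableEq V₁] [DecidableEq V₂]

lemma isIR2DF_inr_of_delete_root {f : V₁ ⊕ V₂ → ℕ}
    (hf : IsIR2DF (delVert (compGraph T₁ T₂ r₁ r₂) (.inl r₁)) (fun v => f v.1)) :
    IsIR2DF T₂ (fun v => f (.inr v)) := by
  refine hf.comp_embedding (inrEmbedding T₁ T₂ r₁ r₂) fun v ⟨u, hu⟩ h => ?_
  cases u with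
  | inl a => exact absurd (congrArg Sum.inl (adj_inr_inl.1 h).1) hu
  | inr a => exact ⟨a, rfl⟩

lemma isIR2DF_inl_of_delete_root {f : V₁ ⊕ V₂ → ℕ}
    (hf : IsIR2DF (delVert (compGraph T₁ T₂ r₁ r₂) (.inl r₁)) (fun v => f v.1)) :
    IsIR2DF (delVert T₁ r₁) (fun v => f (.inl v.1)) := by
  refine hf.comp_embedding (inlEmbedding T₁ T₂ r₁ r₂) fun v ⟨u, hu⟩ h => ?_
  cases u with
  | inl a => exact ⟨⟨a, fun ha => hu (congrArg Sum.inl ha)⟩, rfl⟩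
  | inr a => exact absurd (adj_inl_inr.1 h).1 v.2

end compGraph

theorem stmt_17_general {V₁ V₂ : Type*} [Fintype V₁] [Fintype V₂] [DecidableEq V₁] [DecidableEq V₂]
    (T₁ : SimpleGraph V₁) (T₂ : SimpleGraph V₂)
    (r₁ : V₁) (r₂ : V₂)
    (f : V₁ ⊕ V₂ → ℕ)
    (h0 : f (Sum.inl r₁) = 0)
    (hdel : IsIR2DF (delVert (compGraph T₁ T₂ r₁ r₂) (Sum.inl r₁)) (fun v => f v.1))
    (hN : closedNbrSum (compGraph T₁ T₂ r₁ r₂) f (Sum.inl r₁) = 1) :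
    Xor'
      (f (Sum.inr r₂) = 0 ∧ IsIR2DF T₂ (fun v => f (Sum.inr v)) ∧
        ¬ IsIR2DF T₁ (fun v => f (Sum.inl v)) ∧
        closedNbrSum T₁ (fun v => f (Sum.inl v)) r₁ = 1 ∧
        IsIR2DF (delVert T₁ r₁) (fun v => f (Sum.inl v.1)))
      (f (Sum.inr r₂) = 1 ∧ IsIR2DF T₂ (fun v => f (Sum.inr v)) ∧
        ¬ IsIR2DF T₁ (fun v => f (Sum.inl v)) ∧
        closedNbrSum T₁ (fun v => f (Sum.inl v)) r₁ = 0 ∧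
        IsIR2DF (delVert T₁ r₁) (fun v => f (Sum.inl v.1))) := by
  have hsplit : nbrSum T₁ (fun v => f (.inl v)) r₁ + f (.inr r₂) = 1 := by
    rwa [closedNbrSum, compGraph.nbrSum_inl_root, h0, zero_add] at hN
  have hroot : closedNbrSum T₁ (fun v => f (.inl v)) r₁ = nbrSum T₁ (fun v => f (.inl v)) r₁ := by
    simp only [closedNbrSum, h0, zero_add]
  have hT₁ : ¬ IsIR2DF T₁ (fun v => f (.inl v)) := fun h => by
    have := h.1.2 r₁ h0
    omega
  have hT₂ := compGraph.isIR2DF_inr_of_delete_root hdel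
  have hT₁del := compGraph.isIR2DF_inl_of_delete_root hdel
  rcases Nat.lt_or_ge (f (.inr r₂)) 1 with hr | hr
  · exact Or.inl ⟨⟨by omega, hT₂, hT₁, by omega, hT₁del⟩, fun h => by omega⟩
  · exact Or.inr ⟨⟨by omega, hT₂, hT₁, by omega, hT₁del⟩, fun h => by omega⟩

theorem stmt_17 {V₁ V₂ : Type*} [Fintype V₁] [Fintype V₂] [DecidableEq V₁] [DecidableEq V₂]
    (T₁ : SimpleGraph V₁) (T₂ : SimpleGraph V₂) (hT₁ : T₁.IsTree) (hT₂ : T₂.IsTree)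
    (r₁ : V₁) (r₂ : V₂)
    (f : V₁ ⊕ V₂ → ℕ) (hb : ∀ x, f x ≤ 2)
    (h0 : f (Sum.inl r₁) = 0)
    (hnot : ¬ IsIR2DF (compGraph T₁ T₂ r₁ r₂) f)
    (hdel : IsIR2DF (delVert (compGraph T₁ T₂ r₁ r₂) (Sum.inl r₁)) (fun v => f v.1))
    (hN : closedNbrSum (compGraph T₁ T₂ r₁ r₂) f (Sum.inl r₁) = 1) :
    Xor'
      (f (Sum.inr r₂) = 0 ∧ IsIR2DF T₂ (fun v => f (Sum.inr v)) ∧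
        ¬ IsIR2DF T₁ (fun v => f (Sum.inl v)) ∧
        closedNbrSum T₁ (fun v => f (Sum.inl v)) r₁ = 1 ∧
        IsIR2DF (delVert T₁ r₁) (fun v => f (Sum.inl v.1)))
      (f (Sum.inr r₂) = 1 ∧ IsIR2DF T₂ (fun v => f (Sum.inr v)) ∧
        ¬ IsIR2DF T₁ (fun v => f (Sum.inl v)) ∧
        closedNbrSum T₁ (fun v => f (Sum.inl v)) r₁ = 0 ∧
        IsIR2DF (delVert T₁ r₁) (fun v => f (Sum.inl v.1))) :=
  stmt_17_general T₁ T₂ r₁ r₂ f h0 hdel hN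
end
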